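/- arXiv:2004.08251 — 3 statements merged into one kernel-verified Lean document; each statement's English description precedes it below -/
import Mathlib

section
/- Let k be a commutative ring, G a group, H a subgroup, and suppose k[G/H] is a flat k[G]-module. Then every element h of H has finite order. -/
open scoped BigOperators

/-- A module `M` over a (possibly noncommutative) ring `R` is flat, expressed via the
equational criterion for flatness (which is equivalent to exactness of the tensor
product with `M`, and makes sense over noncommutative rings). -/
def IsFlatModule (R M : Type*) [Ring R] [AddCommGroup M] [Module R M] : Prop :=
  ∀ (n : ℕ) (r : Fin n → R) (x : Fin n → M), (∑ i, r i • x i) = 0 →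
    ∃ (m : ℕ) (a : Fin n → Fin m → R) (y : Fin m → M),
      (∀ i, x i = ∑ j, a i j • y j) ∧ ∀ j, (∑ i, r i * a i j) = 0

/-! If `h ∈ H` then `h - 1` kills the coset `H` in `k[G/H]`, a nonzero vector. Over any ring, a
flat module has no nonzero vector killed by a left-regular element (apply the equational
criterion to the single relation `r • x = 0`). But for `h` of infinite order, `h - 1` is
left-regular in `k[G]`: an element `b` with `h * b = b` has coefficients constant on the
infinite sets `{h ^ n * g}`, so its finite support must be empty. -/

namespace IsFlatModule

variable {R M : Type*} [Ring R] [AddCommGroup M] [Module R M]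

theorem eq_zero_of_smul_eq_zero (hM : IsFlatModule R M) {r : R} (hr : IsLeftRegular r) {x : M}
    (hx : r • x = 0) : x = 0 := by
  obtain ⟨m, a, y, hxy, hrel⟩ := hM 1 ![r] ![x] (by simpa using hx)
  have ha : ∀ j, a 0 j = 0 := fun j => hr.mul_left_eq_zero_iff.mp (by simpa using hrel j)
  simpa [ha] using hxy 0

end IsFlatModule

namespace MonoidAlgebra

variable {k G : Type*} [Ring k] [Group G] {h : G}

theorem coeff_pow_mul_of_single_mul_eq {b : MonoidAlgebra k G} (hb : single h 1 * b = b)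
    (n : ℕ) (g : G) : b.coeff (h ^ n * g) = b.coeff g := by
  induction n generalizing g with
  | zero => simp
  | succ n ih =>
    have hstep := congrArg (fun f : MonoidAlgebra k G => f.coeff (h * g)) hb
    simp only [coeff_single_mul_apply, inv_mul_cancel_left, one_mul] at hstep
    rw [pow_succ, mul_assoc, ih, hstep]

theorem eq_zero_of_single_mul_eq (hh : ¬ IsOfFinOrder h) {b : MonoidAlgebra k G}
    (hb : single h 1 * b = b) : b = 0 := by
  by_contra hb0
  obtain ⟨g, hg⟩ : ∃ g, b.coeff g ≠ 0 := by
    by_contra! hzero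
    exact hb0 (coeff_eq_zero.mp (Finsupp.ext hzero))
  have hinj : Function.Injective (fun n : ℕ => h ^ n * g) := fun n m hnm =>
    injective_pow_iff_not_isOfFinOrder.mpr hh (mul_right_cancel hnm)
  refine Set.infinite_of_injective_forall_mem hinj (fun n => ?_) b.coeff.support.finite_toSet
  simpa [coeff_pow_mul_of_single_mul_eq hb] using hg

theorem isLeftRegular_single_sub_one (hh : ¬ IsOfFinOrder h) :
    IsLeftRegular (single h 1 - 1 : MonoidAlgebra k G) :=
  isLeftRegular_iff_right_eq_zero_of_mul.mpr fun b hb =>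
    eq_zero_of_single_mul_eq hh (by rwa [sub_mul, one_mul, sub_eq_zero] at hb)

end MonoidAlgebra

namespace Representation

variable {k G X : Type*} [CommRing k] [Monoid G] [MulAction G X]

theorem single_sub_one_smul_asModuleEquiv_symm_single {g : G} {x : X} (hgx : g • x = x) :
    (MonoidAlgebra.single g (1 : k) - 1) •
      (ofMulAction k G X).asModuleEquiv.symm (MonoidAlgebra.single x 1) = 0 := by
  apply (ofMulAction k G X).asModuleEquiv.injective
  rw [asModuleEquiv_map_smul, map_zero, map_sub, map_one, LinearMap.sub_apply,
    asAlgebraHom_single, one_smul, LinearEquiv.apply_symm_apply, ofMulAction_single, hgx,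
    Module.End.one_apply, sub_self]

end Representation

/-- Let `k` be a nonzero commutative ring, `G` a group, `H ≤ G` a
subgroup, and suppose the permutation module `k[G/H]` is a flat `k[G]`-module.
Then every element `h` of `H` has finite order. -/
theorem finite_order_of_permutation_module_flat
    (k G : Type*) [CommRing k] [Nontrivial k] [Group G] (H : Subgroup G)
    (hflat : IsFlatModule (MonoidAlgebra k G)
      (Representation.ofMulAction k G (G ⧸ H)).asModule) :
    ∀ h ∈ H, IsOfFinOrder h := by
  intro h hH
  by_contra hh
  have hfix : h • ((1 : G) : G ⧸ H) = (1 : G) := by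
    rwa [← MulAction.mem_stabilizer_iff, MulAction.stabilizer_quotient]
  have hzero := hflat.eq_zero_of_smul_eq_zero (MonoidAlgebra.isLeftRegular_single_sub_one hh)
    (Representation.single_sub_one_smul_asModuleEquiv_symm_single (k := k) hfix)
  simp only [LinearEquiv.map_eq_zero_iff, MonoidAlgebra.single_eq_zero, one_ne_zero] at hzero
end

section
/- Let S be a (possibly non-unital) ring with an approximate unit given by a directed net of idempotents (e_i) satisfying e_i s = s = s e_i eventually for all s, and e_j e_i = e_i e_j = e_i for i ≤ j. If M is a non-degenerate left S-module (i.e., SM = M), then the natural multiplication map S ⊗_S M → M is an isomorphism of S-modules. -/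
/-!
Modulo the relations, every `x ∈ S ⊗[ℤ] M` equals `e i ⊗ μ x` for all large `i`, where `μ` is the
multiplication map: on a pure tensor, `s ⊗ m = (e i * s) ⊗ m ≡ e i ⊗ (s • m)` as soon as
`e i * s = s`, which holds eventually because `e j * e i = e i` for `i ≤ j`; a common large index
then handles sums. So `μ x = 0` forces `x ≡ 0`, and `m = e i • m = μ (e i ⊗ m)` gives surjectivity.
-/

open TensorProduct

/-- The tensor product `S ⊗_S M` over a possibly non-unital ring `S`: the quotient of the
`ℤ`-tensor product `S ⊗[ℤ] M` by the relations `(s * r) ⊗ m = s ⊗ (r • m)`. Here the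
relations submodule. -/
def nonUnitalTensorRel (S M : Type*) [NonUnitalRing S] [AddCommGroup M] [SMul S M] :
    Submodule ℤ (S ⊗[ℤ] M) :=
  Submodule.span ℤ {x | ∃ (s r : S) (m : M), x = (s * r) ⊗ₜ[ℤ] m - s ⊗ₜ[ℤ] (r • m)}

open Filter

section ApproxUnit

variable {S I : Type*} [Semigroup S] [Preorder I] (e : I → S)

theorem eventually_approxUnit_mul (hmul : ∀ i j, i ≤ j → e j * e i = e i)
    (hleft : ∀ s : S, ∃ i, e i * s = s) (s : S) : ∀ᶠ i in atTop, e i * s = s := by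
  obtain ⟨i₀, hi₀⟩ := hleft s
  filter_upwards [eventually_ge_atTop i₀] with j hj
  rw [← hi₀, ← mul_assoc, hmul i₀ j hj]

end ApproxUnit

section NonUnitalTensor

variable {S M : Type*} [NonUnitalRing S] [AddCommGroup M] [SMul S M]
  (hdistl : ∀ (s : S) (m m' : M), s • (m + m') = s • m + s • m')
  (hdistr : ∀ (s s' : S) (m : M), (s + s') • m = s • m + s' • m)

def tensorSMul : S ⊗[ℤ] M →+ M :=
  liftAddHom
    (AddMonoidHom.mk' (fun s => AddMonoidHom.mk' (s • ·) (hdistl s))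
      fun s s' => AddMonoidHom.ext (hdistr s s'))
    fun n s m => by simp only [map_zsmul, AddMonoidHom.smul_apply]

@[simp]
theorem tensorSMul_tmul (s : S) (m : M) : tensorSMul hdistl hdistr (s ⊗ₜ m) = s • m :=
  rfl

theorem nonUnitalTensorRel_le_ker_tensorSMul
    (hassoc : ∀ (s t : S) (m : M), (s * t) • m = s • (t • m)) :
    nonUnitalTensorRel S M ≤ LinearMap.ker (tensorSMul hdistl hdistr).toIntLinearMap := by
  rw [nonUnitalTensorRel, Submodule.span_le]
  rintro _ ⟨s, r, m, rfl⟩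
  simp [hassoc]

theorem mk_mul_tmul (s r : S) (m : M) :
    (Submodule.Quotient.mk ((s * r) ⊗ₜ[ℤ] m) : (S ⊗[ℤ] M) ⧸ nonUnitalTensorRel S M) =
      Submodule.Quotient.mk (s ⊗ₜ[ℤ] (r • m)) :=
  (Submodule.Quotient.eq _).2 (Submodule.subset_span ⟨s, r, m, rfl⟩)

theorem eventually_mk_eq_mk_approxUnit_tmul {I : Type*} [Preorder I]
    (e : I → S) (hmul : ∀ i j, i ≤ j → e j * e i = e i) (hleft : ∀ s : S, ∃ i, e i * s = s)
    (x : S ⊗[ℤ] M) :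
    ∀ᶠ i in atTop, (Submodule.Quotient.mk x : (S ⊗[ℤ] M) ⧸ nonUnitalTensorRel S M) =
      Submodule.Quotient.mk (e i ⊗ₜ[ℤ] tensorSMul hdistl hdistr x) := by
  induction x using TensorProduct.induction_on with
  | zero => exact .of_forall fun i => by simp
  | tmul s m =>
    filter_upwards [eventually_approxUnit_mul e hmul hleft s] with i hi
    rw [tensorSMul_tmul, ← mk_mul_tmul, hi]
  | add x y hx hy =>
    filter_upwards [hx, hy] with i hxi hyi
    rw [Submodule.Quotient.mk_add, hxi, hyi, map_add, tmul_add, Submodule.Quotient.mk_add]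

end NonUnitalTensor

theorem approxUnit_tensor_iso_general
    (S M : Type*) [NonUnitalRing S] [AddCommGroup M] [SMul S M]
    -- `M` is a left `S`-module over the non-unital ring `S`:
    (hdistl : ∀ (s : S) (m m' : M), s • (m + m') = s • m + s • m')
    (hdistr : ∀ (s s' : S) (m : M), (s + s') • m = s • m + s' • m)
    (hassoc : ∀ (s t : S) (m : M), (s * t) • m = s • (t • m))
    -- approximate unit:
    (I : Type*) [Preorder I] [IsDirected I (· ≤ ·)]
    (e : I → S)
    (happrox : ∀ s : S, ∃ i, e i * s = s ∧ s * e i = s)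
    (hcompat : ∀ i j, i ≤ j → e j * e i = e i ∧ e i * e j = e i)
    -- `M` is non-degenerate:
    (hnondeg : ∀ m : M, ∃ i, e i • m = m) :
    ∃ f : (S ⊗[ℤ] M) ⧸ nonUnitalTensorRel S M →+ M,
      (∀ (s : S) (m : M),
        f (Submodule.Quotient.mk (s ⊗ₜ[ℤ] m)) = s • m) ∧ Function.Bijective f := by
  have : Nonempty I := ⟨(happrox 0).choose⟩
  let f := Submodule.liftQ _ _ (nonUnitalTensorRel_le_ker_tensorSMul hdistl hdistr hassoc)
  refine ⟨f.toAddMonoidHom, fun _ _ => rfl, (injective_iff_map_eq_zero _).2 ?_, fun m => ?_⟩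
  · rintro ⟨x⟩ hx
    obtain ⟨i, hi⟩ := (eventually_mk_eq_mk_approxUnit_tmul hdistl hdistr e
      (fun i j h => (hcompat i j h).1) (fun s => (happrox s).imp fun _ => And.left) x).exists
    change tensorSMul hdistl hdistr x = 0 at hx
    rw [Submodule.Quotient.quot_mk_eq_mk, hi, hx, tmul_zero, Submodule.Quotient.mk_zero]
  · obtain ⟨i, hi⟩ := hnondeg m
    exact ⟨Submodule.Quotient.mk (e i ⊗ₜ m), hi⟩

/-- Let `S` be a (possibly non-unital) ring with an approximate unit,
i.e. a net of idempotents `e : I → S` over a directed partially ordered index set such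
that every `s ∈ S` satisfies `e i * s = s = s * e i` for some `i`, and
`e j * e i = e i * e j = e i` for `i ≤ j`.  If `M` is a non-degenerate left `S`-module,
then the natural multiplication map `S ⊗_S M → M` is an isomorphism of `S`-modules:
there is an additive bijection `f` from the quotient `(S ⊗[ℤ] M) ⧸ (relations)` to `M`
with `f ⟦s ⊗ m⟧ = s • m` (this formula also makes `f` automatically `S`-equivariant). -/
theorem approxUnit_tensor_iso
    (S M : Type*) [NonUnitalRing S] [AddCommGroup M] [SMul S M]
    -- `M` is a left `S`-module over the non-unital ring `S`:
    (hdistl : ∀ (s : S) (m m' : M), s • (m + m') = s • m + s • m')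
    (hdistr : ∀ (s s' : S) (m : M), (s + s') • m = s • m + s' • m)
    (hassoc : ∀ (s t : S) (m : M), (s * t) • m = s • (t • m))
    -- approximate unit:
    (I : Type*) [Preorder I] [IsDirected I (· ≤ ·)]
    (e : I → S)
    (hidem : ∀ i, e i * e i = e i)
    (happrox : ∀ s : S, ∃ i, e i * s = s ∧ s * e i = s)
    (hcompat : ∀ i j, i ≤ j → e j * e i = e i ∧ e i * e j = e i)
    -- `M` is non-degenerate:
    (hnondeg : ∀ m : M, ∃ i, e i • m = m) :
    ∃ f : (S ⊗[ℤ] M) ⧸ nonUnitalTensorRel S M →+ M,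
      (∀ (s : S) (m : M),
        f (Submodule.Quotient.mk (s ⊗ₜ[ℤ] m)) = s • m) ∧ Function.Bijective f :=
  approxUnit_tensor_iso_general S M hdistl hdistr hassoc I e happrox hcompat hnondeg
end

section
/- Let S be a ring with approximate unit and A an S-algebra with approximate unit. Then there is a short exact sequence of (A,A)-bimodules 0 → Ω¹_S A → A ⊗_S A → A → 0, where the right-hand map is multiplication a₀ ⊗ a₁ ↦ a₀a₁, and Ω¹_S A = A ⊗_S (A/S) carries the Leibniz bimodule structure a·(b ⊗ [c])·d = ab ⊗ [cd] − abc ⊗ [d]. -/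
/-!
Pick for every `a : A` an index `i` with `a * e i = a`. The class of `a ⊗ e i` in `A ⊗_S A`
does not depend on the choice: for `i ≤ j` the relation `a e_i ⊗ e_j = a ⊗ e_i e_j` identifies
`a ⊗ e_j` with `a ⊗ e_i`, and the index set is directed. This gives an additive section `σ` of
the multiplication `μ` with `σ (c a) = c σ(a)` and `σ(a) d = a ⊗ d`. Then
`κ (a ⊗ [b]) = a ⊗ b - σ(a b)` is well defined (it kills `a ⊗ [s]` because `s e_j = s`), the
projection `p : a ⊗ b ↦ a ⊗ [b]` is a retraction of `κ`, and `κ ∘ p + σ ∘ μ = id`. So the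
sequence is split exact as abelian groups, and the two identities for `σ` make `κ` a bimodule
map for the Leibniz structure.
-/

open TensorProduct

section CuntzQuillen

variable (S A : Type*) [NonUnitalRing S] [NonUnitalRing A] (φ : S →ₙ+* A)

/-- The image of `S` in `A`, as a `ℤ`-submodule (it is an additive subgroup, so its
`ℤ`-span is itself). -/
def imageOfS : Submodule ℤ A := Submodule.span ℤ (Set.range φ)

/-- The relations defining the tensor product `A ⊗_S A` over the non-unital ring `S`
as a quotient of `A ⊗[ℤ] A`. -/
def tensorSRel : Submodule ℤ (A ⊗[ℤ] A) :=
  Submodule.span ℤ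
    {x | ∃ (s : S) (a b : A), x = (a * φ s) ⊗ₜ[ℤ] b - a ⊗ₜ[ℤ] (φ s * b)}

/-- `A ⊗_S A`, the tensor product over the non-unital ring `S`. -/
def tensorSAA := (A ⊗[ℤ] A) ⧸ tensorSRel S A φ

noncomputable instance : AddCommGroup (tensorSAA S A φ) :=
  inferInstanceAs (AddCommGroup ((A ⊗[ℤ] A) ⧸ tensorSRel S A φ))

/-- The relations defining `Ω¹_S A = A ⊗_S (A/S)` as a quotient of `A ⊗[ℤ] (A/S)`. -/
def omegaRel : Submodule ℤ (A ⊗[ℤ] (A ⧸ imageOfS S A φ)) :=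
  Submodule.span ℤ
    {x | ∃ (s : S) (a b : A),
      x = (a * φ s) ⊗ₜ[ℤ] (Submodule.Quotient.mk b)
        - a ⊗ₜ[ℤ] (Submodule.Quotient.mk (φ s * b) : A ⧸ imageOfS S A φ)}

/-- `Ω¹_S A = A ⊗_S (A/S)`, the bimodule of differential forms of degree one. -/
def omegaSA := (A ⊗[ℤ] (A ⧸ imageOfS S A φ)) ⧸ omegaRel S A φ

noncomputable instance : AddCommGroup (omegaSA S A φ) :=
  inferInstanceAs (AddCommGroup ((A ⊗[ℤ] (A ⧸ imageOfS S A φ)) ⧸ omegaRel S A φ))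

/-- class of `a ⊗ b` in `A ⊗_S A` -/
noncomputable def mkT (a b : A) : tensorSAA S A φ :=
  Submodule.Quotient.mk (a ⊗ₜ[ℤ] b)

/-- class of `a ⊗ [b]` in `Ω¹_S A` -/
noncomputable def mkO (a b : A) : omegaSA S A φ :=
  Submodule.Quotient.mk (a ⊗ₜ[ℤ] (Submodule.Quotient.mk b : A ⧸ imageOfS S A φ))

theorem AddMonoidHom.map_zsmul_left_eq_map_zsmul_right {M N P : Type*} [AddCommGroup M]
    [AddCommGroup N] [AddCommGroup P] (f : M →+ N →+ P) (r : ℤ) (m : M) (n : N) :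
    f (r • m) n = f m (r • n) := by
  rw [map_zsmul, AddMonoidHom.smul_apply, map_zsmul]

section Development

variable {S A φ}

section Generators

theorem mkT_add_left (a a' b : A) :
    mkT S A φ (a + a') b = mkT S A φ a b + mkT S A φ a' b := by
  rw [mkT, add_tmul, Submodule.Quotient.mk_add]; rfl

theorem mkT_add_right (a b b' : A) :
    mkT S A φ a (b + b') = mkT S A φ a b + mkT S A φ a b' := by
  rw [mkT, tmul_add, Submodule.Quotient.mk_add]; rfl

theorem mkT_mul_map (s : S) (a b : A) : mkT S A φ (a * φ s) b = mkT S A φ a (φ s * b) :=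
  (Submodule.Quotient.eq _).mpr (Submodule.subset_span ⟨s, a, b, rfl⟩)

theorem mkO_add_left (a a' b : A) :
    mkO S A φ (a + a') b = mkO S A φ a b + mkO S A φ a' b := by
  rw [mkO, add_tmul, Submodule.Quotient.mk_add]; rfl

theorem mkO_add_right (a b b' : A) :
    mkO S A φ a (b + b') = mkO S A φ a b + mkO S A φ a b' := by
  rw [mkO, Submodule.Quotient.mk_add, tmul_add, Submodule.Quotient.mk_add]; rfl

theorem mkO_mul_map (s : S) (a b : A) : mkO S A φ (a * φ s) b = mkO S A φ a (φ s * b) :=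
  (Submodule.Quotient.eq _).mpr (Submodule.subset_span ⟨s, a, b, rfl⟩)

theorem mkO_map_eq_zero (a : A) (s : S) : mkO S A φ a (φ s) = 0 := by
  have h : (Submodule.Quotient.mk (φ s) : A ⧸ imageOfS S A φ) = 0 :=
    (Submodule.Quotient.mk_eq_zero _).mpr (Submodule.subset_span ⟨s, rfl⟩)
  rw [mkO, h, tmul_zero, Submodule.Quotient.mk_zero]; rfl

variable (φ)

noncomputable def mkTHom : A →+ A →+ tensorSAA S A φ :=
  AddMonoidHom.mk' (fun a => AddMonoidHom.mk' (mkT S A φ a) (mkT_add_right a))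
    fun a a' => AddMonoidHom.ext (mkT_add_left a a')

noncomputable def mkOHom : A →+ A →+ omegaSA S A φ :=
  AddMonoidHom.mk' (fun a => AddMonoidHom.mk' (mkO S A φ a) (mkO_add_right a))
    fun a a' => AddMonoidHom.ext (mkO_add_left a a')

@[simp] theorem mkTHom_apply (a b : A) : mkTHom φ a b = mkT S A φ a b := rfl

@[simp] theorem mkOHom_apply (a b : A) : mkOHom φ a b = mkO S A φ a b := rfl

end Generators

namespace tensorSAA

variable {M : Type*} [AddCommGroup M]

variable (φ) in
noncomputable def lift (f : A →+ A →+ M)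
    (hf : ∀ (s : S) (a b : A), f (a * φ s) b = f a (φ s * b)) : tensorSAA S A φ →+ M :=
  ((tensorSRel S A φ).liftQ
      (liftAddHom f f.map_zsmul_left_eq_map_zsmul_right).toIntLinearMap <| by
    rw [tensorSRel, Submodule.span_le]
    rintro _ ⟨s, a, b, rfl⟩
    simp [hf]).toAddMonoidHom

theorem induction_on {P : tensorSAA S A φ → Prop} (x : tensorSAA S A φ)
    (tmul : ∀ a b, P (mkT S A φ a b)) (add : ∀ x y, P x → P y → P (x + y)) : P x := by
  obtain ⟨y, rfl⟩ := Submodule.Quotient.mk_surjective _ x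
  induction y using TensorProduct.induction_on with
  | zero => simpa [mkT] using tmul 0 0
  | tmul a b => exact tmul a b
  | add y z hy hz => exact add _ _ hy hz

end tensorSAA

namespace omegaSA

variable {M : Type*} [AddCommGroup M]

variable (φ) in
noncomputable def lift (f : A →+ A →+ M) (hS : ∀ (a : A) (s : S), f a (φ s) = 0)
    (hf : ∀ (s : S) (a b : A), f (a * φ s) b = f a (φ s * b)) : omegaSA S A φ →+ M :=
  let g : A →+ (A ⧸ imageOfS S A φ) →+ M :=
    ((imageOfS S A φ).liftQ f.flip.toIntLinearMap <| by
      rw [imageOfS, Submodule.span_le]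
      rintro _ ⟨s, rfl⟩
      ext a
      simpa using hS a s).toAddMonoidHom.flip
  ((omegaRel S A φ).liftQ
      (liftAddHom g g.map_zsmul_left_eq_map_zsmul_right).toIntLinearMap <| by
    rw [omegaRel, Submodule.span_le]
    rintro _ ⟨s, a, b, rfl⟩
    simp [g, hf]).toAddMonoidHom

theorem induction_on {P : omegaSA S A φ → Prop} (x : omegaSA S A φ)
    (tmul : ∀ a b, P (mkO S A φ a b)) (add : ∀ x y, P x → P y → P (x + y)) : P x := by
  obtain ⟨y, rfl⟩ := Submodule.Quotient.mk_surjective _ x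
  induction y using TensorProduct.induction_on with
  | zero => simpa [mkO] using tmul 0 0
  | tmul a b =>
    obtain ⟨b, rfl⟩ := Submodule.Quotient.mk_surjective _ b
    exact tmul a b
  | add y z hy hz => exact add _ _ hy hz

end omegaSA

section Bimodule

variable (φ)

noncomputable def tensorMul : tensorSAA S A φ →+ A :=
  tensorSAA.lift φ AddMonoidHom.mul fun s a b => mul_assoc a (φ s) b

noncomputable def tensorLeft (c : A) : tensorSAA S A φ →+ tensorSAA S A φ :=
  tensorSAA.lift φ ((mkTHom φ).comp (AddMonoidHom.mulLeft c)) fun s a b => by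
    simp [← mul_assoc, mkT_mul_map]

noncomputable def tensorRight (d : A) : tensorSAA S A φ →+ tensorSAA S A φ :=
  tensorSAA.lift φ ((mkTHom φ).compl₂ (AddMonoidHom.mulRight d)) fun s a b => by
    simp [mul_assoc, mkT_mul_map]

noncomputable def omegaLeft (c : A) : omegaSA S A φ →+ omegaSA S A φ :=
  omegaSA.lift φ ((mkOHom φ).comp (AddMonoidHom.mulLeft c)) (fun a s => mkO_map_eq_zero _ s)
    fun s a b => by simp [← mul_assoc, mkO_mul_map]

noncomputable def omegaRight (d : A) : omegaSA S A φ →+ omegaSA S A φ :=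
  omegaSA.lift φ ((mkOHom φ).compl₂ (AddMonoidHom.mulRight d)
      - AddMonoidHom.mul.compr₂ ((mkOHom φ).flip d))
    (fun a s => by simp [mkO_mul_map])
    fun s a b => by simp [mul_assoc, mkO_mul_map]

noncomputable def tensorToOmega : tensorSAA S A φ →+ omegaSA S A φ :=
  tensorSAA.lift φ (mkOHom φ) mkO_mul_map

variable {φ}

@[simp] theorem tensorMul_mkT (a b : A) : tensorMul φ (mkT S A φ a b) = a * b := rfl

@[simp] theorem tensorLeft_mkT (c a b : A) :
    tensorLeft φ c (mkT S A φ a b) = mkT S A φ (c * a) b := rfl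

@[simp] theorem tensorRight_mkT (d a b : A) :
    tensorRight φ d (mkT S A φ a b) = mkT S A φ a (b * d) := rfl

@[simp] theorem omegaLeft_mkO (c a b : A) :
    omegaLeft φ c (mkO S A φ a b) = mkO S A φ (c * a) b := rfl

@[simp] theorem omegaRight_mkO (d a b : A) :
    omegaRight φ d (mkO S A φ a b) = mkO S A φ a (b * d) - mkO S A φ (a * b) d := rfl

@[simp] theorem tensorToOmega_mkT (a b : A) :
    tensorToOmega φ (mkT S A φ a b) = mkO S A φ a b := rfl

theorem tensorLeft_tensorLeft (c c' : A) (x : tensorSAA S A φ) :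
    tensorLeft φ c (tensorLeft φ c' x) = tensorLeft φ (c * c') x := by
  induction x using tensorSAA.induction_on with
  | tmul a b => simp [mul_assoc]
  | add x y hx hy => simp only [map_add, hx, hy]

theorem tensorRight_tensorRight (d d' : A) (x : tensorSAA S A φ) :
    tensorRight φ d' (tensorRight φ d x) = tensorRight φ (d * d') x := by
  induction x using tensorSAA.induction_on with
  | tmul a b => simp [mul_assoc]
  | add x y hx hy => simp only [map_add, hx, hy]

theorem tensorRight_tensorLeft (c d : A) (x : tensorSAA S A φ) :
    tensorRight φ d (tensorLeft φ c x) = tensorLeft φ c (tensorRight φ d x) := by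
  induction x using tensorSAA.induction_on with
  | tmul a b => simp
  | add x y hx hy => simp only [map_add, hx, hy]

theorem omegaLeft_omegaLeft (c c' : A) (x : omegaSA S A φ) :
    omegaLeft φ c (omegaLeft φ c' x) = omegaLeft φ (c * c') x := by
  induction x using omegaSA.induction_on with
  | tmul a b => simp [mul_assoc]
  | add x y hx hy => simp only [map_add, hx, hy]

theorem omegaRight_omegaRight (d d' : A) (x : omegaSA S A φ) :
    omegaRight φ d' (omegaRight φ d x) = omegaRight φ (d * d') x := by
  induction x using omegaSA.induction_on with
  | tmul a b =>
    simp only [omegaRight_mkO, map_sub, mul_assoc]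
    abel
  | add x y hx hy => simp only [map_add, hx, hy]

theorem omegaRight_omegaLeft (c d : A) (x : omegaSA S A φ) :
    omegaRight φ d (omegaLeft φ c x) = omegaLeft φ c (omegaRight φ d x) := by
  induction x using omegaSA.induction_on with
  | tmul a b => simp [mul_assoc]
  | add x y hx hy => simp only [map_add, hx, hy]

theorem tensorMul_tensorLeft (c : A) (x : tensorSAA S A φ) :
    tensorMul φ (tensorLeft φ c x) = c * tensorMul φ x := by
  induction x using tensorSAA.induction_on with
  | tmul a b => simp [mul_assoc]
  | add x y hx hy => simp only [map_add, hx, hy, mul_add]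

theorem tensorMul_tensorRight (d : A) (x : tensorSAA S A φ) :
    tensorMul φ (tensorRight φ d x) = tensorMul φ x * d := by
  induction x using tensorSAA.induction_on with
  | tmul a b => simp [mul_assoc]
  | add x y hx hy => simp only [map_add, hx, hy, add_mul]

end Bimodule

section UnitSection

theorem mul_map_eq_of_mul_eq {x : A} {s t : S} (hx : x * φ s = x) (hst : s * t = s) :
    x * φ t = x := by
  conv_lhs => rw [← hx]
  rw [mul_assoc, ← map_mul, hst, hx]

theorem mkT_map_eq_of_mul_eq {x : A} {s t : S} (hx : x * φ s = x) (hst : s * t = s) :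
    mkT S A φ x (φ s) = mkT S A φ x (φ t) := by
  rw [← hst, map_mul, ← mkT_mul_map, hx]

variable {I : Type*} [Preorder I] [IsDirected I (· ≤ ·)] {e : I → S}

theorem mkT_map_eq_of_directed (hcompat : ∀ i j, i ≤ j → e i * e j = e i) {x : A} {i j : I}
    (hi : x * φ (e i) = x) (hj : x * φ (e j) = x) :
    mkT S A φ x (φ (e i)) = mkT S A φ x (φ (e j)) := by
  obtain ⟨k, hik, hjk⟩ := directed_of (· ≤ ·) i j
  rw [mkT_map_eq_of_mul_eq hi (hcompat i k hik), mkT_map_eq_of_mul_eq hj (hcompat j k hjk)]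

variable (hcompat : ∀ i j, i ≤ j → e i * e j = e i) (happroxA : ∀ a : A, ∃ i, a * φ (e i) = a)

noncomputable def unitSection : A →+ tensorSAA S A φ :=
  AddMonoidHom.mk' (fun a => mkT S A φ a (φ (e (happroxA a).choose))) fun a b => by
    obtain ⟨k, hak, hbk⟩ := directed_of (· ≤ ·) (happroxA a).choose (happroxA b).choose
    have ha := mul_map_eq_of_mul_eq (happroxA a).choose_spec (hcompat _ _ hak)
    have hb := mul_map_eq_of_mul_eq (happroxA b).choose_spec (hcompat _ _ hbk)
    have hab : (a + b) * φ (e k) = a + b := by rw [add_mul, ha, hb]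
    rw [mkT_map_eq_of_directed hcompat (happroxA (a + b)).choose_spec hab,
      mkT_map_eq_of_directed hcompat (happroxA a).choose_spec ha,
      mkT_map_eq_of_directed hcompat (happroxA b).choose_spec hb, mkT_add_left]

theorem unitSection_eq {x : A} {i : I} (hi : x * φ (e i) = x) :
    unitSection hcompat happroxA x = mkT S A φ x (φ (e i)) :=
  mkT_map_eq_of_directed hcompat (happroxA x).choose_spec hi

theorem tensorMul_unitSection (x : A) : tensorMul φ (unitSection hcompat happroxA x) = x :=
  (happroxA x).choose_spec

theorem tensorToOmega_unitSection (x : A) :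
    tensorToOmega φ (unitSection hcompat happroxA x) = 0 :=
  mkO_map_eq_zero x _

theorem tensorLeft_unitSection (c x : A) :
    tensorLeft φ c (unitSection hcompat happroxA x) = unitSection hcompat happroxA (c * x) := by
  rw [unitSection_eq hcompat happroxA (x := c * x) (by rw [mul_assoc, (happroxA x).choose_spec])]
  rfl

theorem tensorRight_unitSection (d x : A) :
    tensorRight φ d (unitSection hcompat happroxA x) = mkT S A φ x d := by
  rw [unitSection, AddMonoidHom.mk'_apply, tensorRight_mkT, ← mkT_mul_map,
    (happroxA x).choose_spec]

theorem unitSection_mul_map (happroxS : ∀ s : S, ∃ i, s * e i = s) (a : A) (s : S) :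
    unitSection hcompat happroxA (a * φ s) = mkT S A φ a (φ s) := by
  obtain ⟨j, hj⟩ := happroxS s
  rw [unitSection_eq hcompat happroxA (i := j) (by rw [mul_assoc, ← map_mul, hj]),
    mkT_mul_map, ← map_mul, hj]

variable (happroxS : ∀ s : S, ∃ i, s * e i = s)

noncomputable def omegaToTensor : omegaSA S A φ →+ tensorSAA S A φ :=
  omegaSA.lift φ (mkTHom φ - AddMonoidHom.mul.compr₂ (unitSection hcompat happroxA))
    (fun a s => by simp [unitSection_mul_map hcompat happroxA happroxS])
    fun s a b => by simp [mkT_mul_map, mul_assoc]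

theorem omegaToTensor_mkO (a b : A) :
    omegaToTensor hcompat happroxA happroxS (mkO S A φ a b)
      = mkT S A φ a b - unitSection hcompat happroxA (a * b) := rfl

theorem tensorToOmega_omegaToTensor (w : omegaSA S A φ) :
    tensorToOmega φ (omegaToTensor hcompat happroxA happroxS w) = w := by
  induction w using omegaSA.induction_on with
  | tmul a b => simp [omegaToTensor_mkO, tensorToOmega_unitSection]
  | add x y hx hy => simp only [map_add, hx, hy]

theorem omegaToTensor_tensorToOmega_add_unitSection_tensorMul (t : tensorSAA S A φ) :
    omegaToTensor hcompat happroxA happroxS (tensorToOmega φ t)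
      + unitSection hcompat happroxA (tensorMul φ t) = t := by
  induction t using tensorSAA.induction_on with
  | tmul a b => simp [omegaToTensor_mkO]
  | add x y hx hy =>
    rw [map_add, map_add, map_add, map_add, add_add_add_comm, hx, hy]

theorem tensorMul_omegaToTensor (w : omegaSA S A φ) :
    tensorMul φ (omegaToTensor hcompat happroxA happroxS w) = 0 := by
  induction w using omegaSA.induction_on with
  | tmul a b => simp [omegaToTensor_mkO, tensorMul_unitSection]
  | add x y hx hy => simp only [map_add, hx, hy, add_zero]

theorem omegaToTensor_omegaLeft (c : A) (w : omegaSA S A φ) :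
    omegaToTensor hcompat happroxA happroxS (omegaLeft φ c w)
      = tensorLeft φ c (omegaToTensor hcompat happroxA happroxS w) := by
  induction w using omegaSA.induction_on with
  | tmul a b => simp [omegaToTensor_mkO, tensorLeft_unitSection, mul_assoc]
  | add x y hx hy => simp only [map_add, hx, hy]

theorem omegaToTensor_omegaRight (d : A) (w : omegaSA S A φ) :
    omegaToTensor hcompat happroxA happroxS (omegaRight φ d w)
      = tensorRight φ d (omegaToTensor hcompat happroxA happroxS w) := by
  induction w using omegaSA.induction_on with
  | tmul a b =>
    simp only [omegaRight_mkO, omegaToTensor_mkO, map_sub, tensorRight_mkT,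
      tensorRight_unitSection, mul_assoc]
    abel
  | add x y hx hy => simp only [map_add, hx, hy]

end UnitSection

end Development

theorem cuntzQuillen_ses
    (I : Type*) [Preorder I] [IsDirected I (· ≤ ·)] (e : I → S)
    (happroxS : ∀ s : S, ∃ i, e i * s = s ∧ s * e i = s)
    (hcompat : ∀ i j, i ≤ j → e j * e i = e i ∧ e i * e j = e i)
    (happroxA : ∀ a : A, ∃ i, φ (e i) * a = a ∧ a * φ (e i) = a) :
    ∃ (κ : omegaSA S A φ →+ tensorSAA S A φ)
      (μ : tensorSAA S A φ →+ A)
      (lT rT : A → tensorSAA S A φ →+ tensorSAA S A φ)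
      (lO rO : A → omegaSA S A φ →+ omegaSA S A φ),
      -- the multiplication map
      (∀ a b : A, μ (mkT S A φ a b) = a * b) ∧
      -- the map κ : Ω¹_S A → A ⊗_S A
      (∀ (a b : A) (i : I), (φ (e i) * (a * b) = a * b ∧ (a * b) * φ (e i) = a * b) →
        κ (mkO S A φ a b) = mkT S A φ a b - mkT S A φ (a * b) (φ (e i))) ∧
      -- bimodule structures on `A ⊗_S A` (outer) and `Ω¹_S A` (Leibniz)
      (∀ c a b : A, lT c (mkT S A φ a b) = mkT S A φ (c * a) b) ∧
      (∀ d a b : A, rT d (mkT S A φ a b) = mkT S A φ a (b * d)) ∧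
      (∀ c a b : A, lO c (mkO S A φ a b) = mkO S A φ (c * a) b) ∧
      (∀ d a b : A, rO d (mkO S A φ a b)
        = mkO S A φ a (b * d) - mkO S A φ (a * b) d) ∧
      -- they are right and left actions which commute
      (∀ c c' : A, ∀ x, lT c (lT c' x) = lT (c * c') x) ∧
      (∀ d d' : A, ∀ x, rT d' (rT d x) = rT (d * d') x) ∧
      (∀ c d : A, ∀ x, rT d (lT c x) = lT c (rT d x)) ∧
      (∀ c c' : A, ∀ x, lO c (lO c' x) = lO (c * c') x) ∧
      (∀ d d' : A, ∀ x, rO d' (rO d x) = rO (d * d') x) ∧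
      (∀ c d : A, ∀ x, rO d (lO c x) = lO c (rO d x)) ∧
      -- κ and μ are bimodule maps
      (∀ c x, κ (lO c x) = lT c (κ x)) ∧
      (∀ d x, κ (rO d x) = rT d (κ x)) ∧
      (∀ c x, μ (lT c x) = c * μ x) ∧
      (∀ d x, μ (rT d x) = μ x * d) ∧
      -- exactness: 0 → Ω¹_S A → A ⊗_S A → A → 0
      Function.Injective κ ∧
      Function.Surjective μ ∧
      (∀ t : tensorSAA S A φ, μ t = 0 ↔ ∃ w, κ w = t) := by
  have hcompat' : ∀ i j, i ≤ j → e i * e j = e i := fun i j hij => (hcompat i j hij).2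
  have happroxA' : ∀ a : A, ∃ i, a * φ (e i) = a :=
    fun a => (happroxA a).imp fun _ => And.right
  have happroxS' : ∀ s : S, ∃ i, s * e i = s := fun s => (happroxS s).imp fun _ => And.right
  let κ := omegaToTensor hcompat' happroxA' happroxS'
  refine ⟨κ, tensorMul φ, tensorLeft φ, tensorRight φ, omegaLeft φ, omegaRight φ,
    tensorMul_mkT, fun a b i hi => ?_, tensorLeft_mkT, tensorRight_mkT, omegaLeft_mkO,
    omegaRight_mkO, tensorLeft_tensorLeft, tensorRight_tensorRight, tensorRight_tensorLeft,
    omegaLeft_omegaLeft, omegaRight_omegaRight, omegaRight_omegaLeft,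
    omegaToTensor_omegaLeft _ _ _, omegaToTensor_omegaRight _ _ _, tensorMul_tensorLeft,
    tensorMul_tensorRight, Function.LeftInverse.injective (tensorToOmega_omegaToTensor _ _ _),
    Function.RightInverse.surjective (tensorMul_unitSection hcompat' happroxA'),
    fun t => ⟨fun ht => ⟨tensorToOmega φ t, ?_⟩, ?_⟩⟩
  · rw [omegaToTensor_mkO, unitSection_eq hcompat' happroxA' hi.2]
  · simpa [ht] using
      omegaToTensor_tensorToOmega_add_unitSection_tensorMul hcompat' happroxA' happroxS' t
  · rintro ⟨w, rfl⟩
    exact tensorMul_omegaToTensor ..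

end CuntzQuillen
end
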